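/- arXiv:2502.01935 — 2 statements merged into one kernel-verified Lean document; each statement's English description precedes it below -/
import Mathlib

section
/- Let (X,d) be a compact metric space and let μ : C(X) → [0, μ(X)] be a Whitney map. Then for each ε > 0 there exists δ > 0 such that for all A, B ∈ C(X), if B ⊆ N_d(A, δ) and |μ(A) − μ(B)| < δ, then H_d(A, B) < ε. -/
open Set Metric TopologicalSpace

/-- The hyperspace `C(X)` of all subcontinua of a metric space `X`,
equipped with the Hausdorff metric (via the metric on `NonemptyCompacts X`). -/
abbrev Hyperspace (X : Type) [MetricSpace X] : Type :=
  {K : NonemptyCompacts X // IsConnected (K : Set X)}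

namespace Hyperspace

variable {X : Type} [MetricSpace X]

/-- The underlying subset of `X` of an element of the hyperspace. -/
def toSet (A : Hyperspace X) : Set X := (A.1 : Set X)

/-- The singleton `{x}` as an element of the hyperspace. -/
def sngl (x : X) : Hyperspace X :=
  ⟨⟨⟨{x}, isCompact_singleton⟩, Set.singleton_nonempty x⟩, isConnected_singleton⟩

/-- The whole space as an element of the hyperspace of a continuum. -/
def whole (X : Type) [MetricSpace X] [CompactSpace X] [ConnectedSpace X] : Hyperspace X :=
  ⟨⟨⟨Set.univ, isCompact_univ⟩, Set.univ_nonempty⟩, isConnected_univ⟩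

end Hyperspace

/-- `μ : C(X) → ℝ` is a Whitney map: it is continuous, vanishes on singletons, and is
strictly monotone with respect to strict inclusion. (Its values then automatically lie in
`[0, μ(X)]`.) -/
def IsWhitneyMap {X : Type} [MetricSpace X] (μ : Hyperspace X → ℝ) : Prop :=
  Continuous μ ∧ (∀ x : X, μ (Hyperspace.sngl x) = 0) ∧
    ∀ A B : Hyperspace X, A.toSet ⊂ B.toSet → μ A < μ B

/-- The Whitney level `μ⁻¹(t)`, as a metric subspace of the hyperspace. -/
abbrev WhitneyLevel {X : Type} [MetricSpace X] (μ : Hyperspace X → ℝ) (t : ℝ) : Type :=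
  {A : Hyperspace X // μ A = t}

/-- A subcontinuum: a nonempty compact connected subset. -/
def IsSubcontinuum {Y : Type*} [TopologicalSpace Y] (T : Set Y) : Prop :=
  IsCompact T ∧ IsConnected T

/-- A (metrizable compact connected nonempty) space is a continuum. -/
def IsContinuumSpace (Y : Type*) [MetricSpace Y] : Prop :=
  CompactSpace Y ∧ ConnectedSpace Y

/-- A bundled nonempty compact connected metric space (continuum). -/
structure Continuum where
  carrier : Type
  [metric : MetricSpace carrier]
  [compact : CompactSpace carrier]
  [connected : ConnectedSpace carrier]

instance : CoeSort Continuum Type := ⟨Continuum.carrier⟩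
instance (Z : Continuum) : MetricSpace Z := Z.metric
instance (Z : Continuum) : CompactSpace Z := Z.compact
instance (Z : Continuum) : ConnectedSpace Z := Z.connected

/-- `L` is a partition between `A` and `B`: the complement of `L` is the union of two
disjoint open sets containing `A` and `B` respectively. -/
def IsPartitionBetween {Y : Type*} [TopologicalSpace Y] (L A B : Set Y) : Prop :=
  ∃ U V : Set Y, IsOpen U ∧ IsOpen V ∧ Disjoint U V ∧ A ⊆ U ∧ B ⊆ V ∧ U ∪ V = Lᶜ

/-- A space is weakly infinite-dimensional if every countable family of pairs of disjoint
closed sets admits a family of closed partitions between them. -/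
def WeaklyInfiniteDimensional (Y : Type*) [TopologicalSpace Y] : Prop :=
  ∀ A B : ℕ → Set Y, (∀ i, IsClosed (A i) ∧ IsClosed (B i) ∧ Disjoint (A i) (B i)) →
    ∃ L : ℕ → Set Y, ∀ i, IsClosed (L i) ∧ IsPartitionBetween (L i) (A i) (B i)

/-- Covering dimension at most `n`: every finite open cover has a finite open refinement
of order at most `n + 1`. -/
def CovDimLE (Y : Type*) [TopologicalSpace Y] (n : ℕ) : Prop :=
  ∀ (k : ℕ) (U : Fin k → Set Y), (∀ i, IsOpen (U i)) → (⋃ i, U i) = Set.univ →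
    ∃ (m : ℕ) (V : Fin m → Set Y), (∀ j, IsOpen (V j)) ∧ (⋃ j, V j) = Set.univ ∧
      (∀ j, ∃ i, V j ⊆ U i) ∧ ∀ y : Y, {j | y ∈ V j}.ncard ≤ n + 1

/-- `S ⊆ Y` is an arc with endpoints `a` and `b`. -/
def IsArcWithEndpoints {Y : Type*} [TopologicalSpace Y] (S : Set Y) (a b : Y) : Prop :=
  ∃ f : Set.Icc (0 : ℝ) 1 → Y, Topology.IsEmbedding f ∧ Set.range f = S ∧
    f ⟨0, by norm_num⟩ = a ∧ f ⟨1, by norm_num⟩ = b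

/-- A space contains a simple closed curve if some subspace is homeomorphic to the circle. -/
def ContainsSimpleClosedCurve (Y : Type*) [TopologicalSpace Y] : Prop :=
  ∃ S : Set Y, Nonempty (S ≃ₜ Circle)

/-- A dendrite: a locally connected continuum containing no simple closed curve. -/
def IsDendrite (Y : Type*) [MetricSpace Y] : Prop :=
  CompactSpace Y ∧ ConnectedSpace Y ∧ LocallyConnectedSpace Y ∧ ¬ ContainsSimpleClosedCurve Y

/-- `D`-continuum. -/
def IsDContinuum (Y : Type*) [MetricSpace Y] : Prop :=
  ∀ A B : Set Y, IsSubcontinuum A → IsSubcontinuum B → A.Nontrivial → B.Nontrivial →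
    Disjoint A B → ∃ L : Set Y, IsSubcontinuum L ∧ (A ∩ L).Nonempty ∧ (B ∩ L).Nonempty ∧
      ((A ∪ B) \ L).Nonempty

/-- `D*`-continuum. -/
def IsDStarContinuum (Y : Type*) [MetricSpace Y] : Prop :=
  ∀ A B : Set Y, IsSubcontinuum A → IsSubcontinuum B → A.Nontrivial → B.Nontrivial →
    Disjoint A B → ∃ L : Set Y, IsSubcontinuum L ∧ (A ∩ L).Nonempty ∧ (B ∩ L).Nonempty ∧
      (A \ L).Nonempty ∧ (B \ L).Nonempty

/-- `D**`-continuum. -/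
def IsDStarStarContinuum (Y : Type*) [MetricSpace Y] : Prop :=
  ∀ A B : Set Y, IsSubcontinuum A → IsSubcontinuum B → A.Nontrivial → B.Nontrivial →
    Disjoint A B → ∃ L : Set Y, IsSubcontinuum L ∧ (A ∩ L).Nonempty ∧ (B ∩ L).Nonempty ∧
      (B \ L).Nonempty

/-- Wilder continuum. -/
def IsWilder (Y : Type*) [MetricSpace Y] : Prop :=
  ∀ x y z : Y, x ≠ y → y ≠ z → x ≠ z →
    ∃ L : Set Y, IsSubcontinuum L ∧ x ∈ L ∧ ((y ∈ L ∧ z ∉ L) ∨ (y ∉ L ∧ z ∈ L))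

/-- Semi-aposyndetic continuum. -/
def IsSemiAposyndetic (Y : Type*) [MetricSpace Y] : Prop :=
  ∀ x y : Y, x ≠ y → ∃ T : Set Y, IsSubcontinuum T ∧
    ((x ∈ interior T ∧ y ∉ T) ∨ (x ∉ T ∧ y ∈ interior T))

/-- Aposyndetic continuum. -/
def IsAposyndetic (Y : Type*) [MetricSpace Y] : Prop :=
  ∀ x y : Y, x ≠ y → ∃ T : Set Y, IsSubcontinuum T ∧ x ∈ interior T ∧ y ∉ T

/-- `n`-aposyndetic continuum. -/
def IsNAposyndetic (Y : Type*) [MetricSpace Y] (n : ℕ) : Prop :=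
  ∀ (x : Y) (A : Finset Y), A.card = n → x ∉ A →
    ∃ T : Set Y, IsSubcontinuum T ∧ x ∈ interior T ∧ ∀ a ∈ A, a ∉ T

/-- Countable closed set-aposyndetic continuum. -/
def IsCountableClosedSetAposyndetic (Y : Type*) [MetricSpace Y] : Prop :=
  ∀ (x : Y) (A : Set Y), A.Countable → IsClosed A → x ∉ A →
    ∃ T : Set Y, IsSubcontinuum T ∧ x ∈ interior T ∧ T ⊆ Aᶜ

/-- `0`-dimensional closed set-aposyndetic continuum (via totally disconnected closed sets). -/
def IsZeroDimClosedSetAposyndetic (Y : Type*) [MetricSpace Y] : Prop :=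
  ∀ (x : Y) (A : Set Y), IsTotallyDisconnected A → IsClosed A → x ∉ A →
    ∃ T : Set Y, IsSubcontinuum T ∧ x ∈ interior T ∧ T ⊆ Aᶜ

/-- `n`-dimensional closed set-aposyndetic continuum. -/
def IsNDimClosedSetAposyndetic (Y : Type*) [MetricSpace Y] (n : ℕ) : Prop :=
  ∀ (x : Y) (A : Set Y), IsClosed A → CovDimLE A n → x ∉ A →
    ∃ T : Set Y, IsSubcontinuum T ∧ x ∈ interior T ∧ T ⊆ Aᶜ

/-- Finite-dimensional closed set-aposyndetic continuum. -/
def IsFinDimClosedSetAposyndetic (Y : Type*) [MetricSpace Y] : Prop :=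
  ∀ (x : Y) (A : Set Y), IsClosed A → (∃ n : ℕ, CovDimLE A n) → x ∉ A →
    ∃ T : Set Y, IsSubcontinuum T ∧ x ∈ interior T ∧ T ⊆ Aᶜ

/-- Weakly infinite-dimensional closed set-aposyndetic continuum. -/
def IsWIDClosedSetAposyndetic (Y : Type*) [MetricSpace Y] : Prop :=
  ∀ (x : Y) (A : Set Y), IsClosed A → WeaklyInfiniteDimensional A → x ∉ A →
    ∃ T : Set Y, IsSubcontinuum T ∧ x ∈ interior T ∧ T ⊆ Aᶜ

/-!
If the claim failed for some `ε`, there would be counterexamples `(A_δ, B_δ)` for every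
`δ > 0`. The hyperspace `C(X)` is compact (connectedness is a closed condition in the Vietoris
topology), so these pairs accumulate, as `δ → 0⁺`, at a pair `(A₀, B₀)` with `B₀ ⊆ A₀`,
`μ A₀ = μ B₀` and `H(A₀, B₀) ≥ ε`. Strict monotonicity of `μ` then forces `A₀ = B₀`.
-/

open Filter Topology

namespace TopologicalSpace.NonemptyCompacts

theorem isClosed_setOf_isConnected {α : Type*} [TopologicalSpace α] [T2Space α] :
    IsClosed {K : NonemptyCompacts α | IsConnected (K : Set α)} := by
  refine isOpen_compl_iff.1 (isOpen_iff_forall_mem_open.2 fun K hK => ?_)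
  have hK' : ¬ IsPreconnected (K : Set α) := fun h => hK ⟨K.nonempty, h⟩
  simp only [isPreconnected_iff_subset_of_fully_disjoint_closed K.isCompact.isClosed,
    not_forall, not_or, not_subset] at hK'
  obtain ⟨u, v, hu, hv, hKuv, huv, ⟨x, hxK, hxu⟩, ⟨y, hyK, hyv⟩⟩ := hK'
  obtain ⟨U, V, hU, hV, huU, hvV, hUV⟩ := SeparatedNhds.of_isCompact_isCompact
    (K.isCompact.inter_right hu) (K.isCompact.inter_right hv) (huv.mono inf_le_right inf_le_right)
  have hKUV : (K : Set α) ⊆ U ∪ V := fun z hz =>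
    (hKuv hz).imp (fun h => huU ⟨hz, h⟩) (fun h => hvV ⟨hz, h⟩)
  refine ⟨{L | (L : Set α) ⊆ U ∪ V} ∩ {L | ((L : Set α) ∩ U).Nonempty} ∩
    {L | ((L : Set α) ∩ V).Nonempty}, ?_, ?_, ?_⟩
  · rintro L ⟨⟨hLUV, hLU⟩, hLV⟩ hL
    obtain ⟨z, -, hzU, hzV⟩ := hL.isPreconnected U V hU hV hLUV hLU hLV
    exact hUV.notMem_of_mem_left hzU hzV
  · exact ((isOpen_subsets_of_isOpen (hU.union hV)).inter
      (isOpen_inter_nonempty_of_isOpen hU)).inter (isOpen_inter_nonempty_of_isOpen hV)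
  · refine ⟨⟨hKUV, y, hyK, huU ⟨hyK, ?_⟩⟩, x, hxK, hvV ⟨hxK, ?_⟩⟩
    · exact (hKuv hyK).resolve_right hyv
    · exact (hKuv hxK).resolve_left hxu

section Hausdorff

variable {X : Type*} [MetricSpace X]

theorem subset_cthickening_dist (K L : NonemptyCompacts X) :
    (K : Set X) ⊆ cthickening (dist K L) L := fun _ hx =>
  mem_cthickening_iff.2 (by rw [← edist_dist]; exact infEDist_le_hausdorffEDist_of_mem hx)

theorem subset_cthickening_dist_add_dist {A A' B B' : NonemptyCompacts X} {r : ℝ} (hr : 0 ≤ r)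
    (h : (B : Set X) ⊆ cthickening r A) :
    (B' : Set X) ⊆ cthickening (dist B' B + r + dist A A') A' :=
  calc (B' : Set X)
      ⊆ cthickening (dist B' B) (cthickening r A) :=
        (subset_cthickening_dist B' B).trans (cthickening_subset_of_subset _ h)
    _ ⊆ cthickening (dist B' B + r) A := cthickening_cthickening_subset dist_nonneg hr _
    _ ⊆ cthickening (dist B' B + r) (cthickening (dist A A') A') :=
        cthickening_subset_of_subset _ (subset_cthickening_dist A A')
    _ ⊆ cthickening (dist B' B + r + dist A A') A' :=
        cthickening_cthickening_subset (by positivity) dist_nonneg _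

theorem subset_of_tendsto_of_subset_cthickening {ι : Type*} {l : Filter ι} [l.NeBot]
    {A B : ι → NonemptyCompacts X} {A₀ B₀ : NonemptyCompacts X}
    (hA : Tendsto A l (𝓝 A₀)) (hB : Tendsto B l (𝓝 B₀))
    (hAB : ∀ r > 0, ∀ᶠ i in l, (B i : Set X) ⊆ cthickening r (A i)) :
    (B₀ : Set X) ⊆ A₀ := by
  rw [← A₀.isCompact.isClosed.closure_eq, closure_eq_iInter_cthickening]
  refine subset_iInter₂ fun r hr => ?_
  obtain ⟨i, hAi, hBi, hABi⟩ := ((Metric.tendsto_nhds.1 hA (r / 3) (by positivity)).and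
    ((Metric.tendsto_nhds.1 hB (r / 3) (by positivity)).and (hAB (r / 3) (by positivity)))).exists
  refine (subset_cthickening_dist_add_dist (by positivity) hABi).trans (cthickening_mono ?_ _)
  rw [dist_comm B₀]
  linarith

end Hausdorff

end TopologicalSpace.NonemptyCompacts

-- The Hausdorff metric on `NonemptyCompacts X` induces the Vietoris topology, which is compact.
instance Hyperspace.instCompactSpace {X : Type} [MetricSpace X] [CompactSpace X] :
    CompactSpace (Hyperspace X) :=
  isCompact_iff_compactSpace.1 NonemptyCompacts.isClosed_setOf_isConnected.isCompact

theorem IsWhitneyMap.eq_of_subset_of_le {X : Type} [MetricSpace X] {μ : Hyperspace X → ℝ}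
    (hμ : IsWhitneyMap μ) {A B : Hyperspace X} (hBA : B.toSet ⊆ A.toSet) (hle : μ A ≤ μ B) :
    B = A := by
  by_contra hne
  refine (hμ.2.2 B A (hBA.ssubset_of_ne fun h => hne ?_)).not_ge hle
  exact Subtype.ext (NonemptyCompacts.ext h)

/-- For a compact metric space `X` and a Whitney map `μ` on `C(X)`: for each `ε > 0` there is
`δ > 0` such that if `B ⊆ N_d(A, δ)` and `|μ(A) - μ(B)| < δ` then `H_d(A, B) < ε`. -/
theorem statement0 {X : Type} [MetricSpace X] [CompactSpace X]
    (μ : Hyperspace X → ℝ) (hμ : IsWhitneyMap μ) :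
    ∀ ε > (0 : ℝ), ∃ δ > (0 : ℝ), ∀ A B : Hyperspace X,
      B.toSet ⊆ Metric.thickening δ A.toSet → |μ A - μ B| < δ → dist A B < ε := by
  intro ε hε
  by_contra! hcon
  have : Nonempty (Hyperspace X) := let ⟨A, _⟩ := hcon 1 one_pos; ⟨A⟩
  choose! A B hBA hμAB hdist using hcon
  let 𝒰 := Ultrafilter.of (𝓝[>] (0 : ℝ))
  have hpos : ∀ᶠ δ : ℝ in 𝒰, 0 < δ := Ultrafilter.of_le _ self_mem_nhdsWithin
  have hδ : Tendsto (id : ℝ → ℝ) 𝒰 (𝓝 0) := (Ultrafilter.of_le _).trans nhdsWithin_le_nhds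
  obtain ⟨⟨A₀, B₀⟩, -, hlim⟩ :=
    isCompact_univ.ultrafilter_le_nhds (𝒰.map fun δ => (A δ, B δ)) (by simp)
  have hA : Tendsto A 𝒰 (𝓝 A₀) := (continuous_fst.tendsto _).comp hlim
  have hB : Tendsto B 𝒰 (𝓝 B₀) := (continuous_snd.tendsto _).comp hlim
  have hB₀A₀ : B₀.toSet ⊆ A₀.toSet := by
    refine NonemptyCompacts.subset_of_tendsto_of_subset_cthickening
      ((continuous_subtype_val.tendsto _).comp hA) ((continuous_subtype_val.tendsto _).comp hB)
      fun r hr => ?_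
    filter_upwards [hpos, hδ.eventually (gt_mem_nhds hr)] with δ hδ hδr
    exact (hBA δ hδ).trans (thickening_subset_cthickening_of_le hδr.le _)
  have hμ₀ : μ A₀ - μ B₀ = 0 := by
    refine tendsto_nhds_unique (((hμ.1.tendsto _).comp hA).sub ((hμ.1.tendsto _).comp hB)) ?_
    refine squeeze_zero_norm' ?_ hδ
    filter_upwards [hpos] with δ hδ using (hμAB δ hδ).le
  have hε₀ : ε ≤ dist A₀ B₀ :=
    ge_of_tendsto (hA.dist hB) (hpos.mono fun δ hδ => hdist δ hδ)
  rw [hμ.eq_of_subset_of_le hB₀A₀ (by linarith), dist_self] at hε₀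
  linarith
end

section
/- For each n ∈ ℕ, there exists a nondegenerate continuum X that is n-aposyndetic but not (n+1)-aposyndetic. -/
open Set Metric TopologicalSpace

open Filter Topology

/-! Glue countably many copies of a closed ball `D` in the complex plane, indexed by
`K = {0} ∪ {1/(k+1)}`, along a set `P` of `n + 1` points of the open ball: sheet `c` is the graph
of `c • dist(·, P)` over `D`. Removing `n` points always leaves a glue point free, and since an
open ball minus finitely many points is path-connected, a neighbourhood of any point then
extends through that glue point to a subcontinuum missing the removed points. Removing all
`n + 1` glue points instead makes the sheet index continuous on any continuum; near the limit
sheet `0` a neighbourhood meets other sheets, so a continuum there would carry a nondegenerate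
interval of indices inside the countable set `K`. -/

section Subspace

variable {Y : Type*} [MetricSpace Y] {X : Set Y}

theorem isNAposyndetic_subtype_iff {n : ℕ} :
    IsNAposyndetic X n ↔ ∀ x ∈ X, ∀ A : Finset Y, A.card = n → ↑A ⊆ X → x ∉ A →
      ∃ T ⊆ X, IsCompact T ∧ IsConnected T ∧ T ∈ 𝓝[X] x ∧ Disjoint T A := by
  classical
  constructor
  · intro H x hx A hAn hAX hxA
    obtain ⟨T, ⟨hTc, hTconn⟩, hxT, hAT⟩ := H ⟨x, hx⟩ (A.subtype (· ∈ X))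
      (by rwa [Finset.card_subtype, Finset.filter_true_of_mem hAX]) (by simpa using hxA)
    refine ⟨(↑) '' T, Subtype.coe_image_subset X T, Subtype.isCompact_iff.1 hTc,
      hTconn.image _ continuous_subtype_val.continuousOn,
      mem_nhds_subtype_iff_nhdsWithin.1 (mem_interior_iff_mem_nhds.1 hxT), ?_⟩
    rw [Set.disjoint_left]
    rintro _ ⟨a, haT, rfl⟩ haA
    exact hAT a (by simpa using haA) haT
  · intro H x A hAn hxA
    obtain ⟨T, hTX, hTc, hTconn, hxT, hAT⟩ := H x x.2 (A.map (Function.Embedding.subtype _))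
      (by rw [Finset.card_map, hAn]) (by simp) (by simpa using hxA)
    have hT : (↑) '' ((↑) ⁻¹' T : Set X) = T := by
      rw [Subtype.image_preimage_coe, inter_eq_self_of_subset_right hTX]
    refine ⟨(↑) ⁻¹' T, ⟨Subtype.isCompact_iff.2 (by rwa [hT]), ?_⟩, ?_, ?_⟩
    · rw [← hT] at hTconn
      exact ⟨hTconn.nonempty.of_image, Topology.IsInducing.subtypeVal.isPreconnected_image.1
        hTconn.isPreconnected⟩
    · rw [mem_interior_iff_mem_nhds, mem_nhds_subtype_iff_nhdsWithin, hT]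
      exact hxT
    · intro a ha haT
      exact Set.disjoint_left.1 hAT haT (Finset.mem_map_of_mem _ ha)

end Subspace

section PathConnected

variable {E : Type*} [NormedAddCommGroup E] [NormedSpace ℝ E]

theorem Set.Countable.isPathConnected_ball_diff_of_one_lt_rank (h : 1 < Module.rank ℝ E)
    {s : Set E} (hs : s.Countable) (c : E) {r : ℝ} (hr : 0 < r) :
    IsPathConnected (ball c r \ s) := by
  set f := OpenPartialHomeomorph.univBall c r
  have hrange : range f = ball c r := by
    rw [← image_univ, ← OpenPartialHomeomorph.univBall_source c r,
      f.image_source_eq_target, OpenPartialHomeomorph.univBall_target c hr]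
  have hs' : (f ⁻¹' s).Countable := hs.preimage_of_injOn (f.injOn.mono (by simp [f]))
  rw [← hrange, ← image_compl_preimage]
  exact (hs'.isPathConnected_compl_of_one_lt_rank h).image
    (OpenPartialHomeomorph.continuous_univBall c r)

theorem exists_isConnected_mem_nhdsWithin_closedBall_diff [ProperSpace E]
    (h : 1 < Module.rank ℝ E) {s : Set E} (hs : s.Finite) {c z p : E} {r : ℝ}
    (hz : z ∈ closedBall c r) (hzs : z ∉ s) (hp : p ∈ ball c r) (hps : p ∉ s) :
    ∃ R ⊆ closedBall c r \ s, IsCompact R ∧ IsConnected R ∧ p ∈ R ∧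
      R ∈ 𝓝[closedBall c r] z := by
  have hr : 0 < r := pos_of_mem_ball hp
  obtain ⟨δ, hδ, hδs⟩ := nhds_basis_closedBall.mem_iff.1 (hs.isClosed.isOpen_compl.mem_nhds hzs)
  obtain ⟨z', hz'δ, hz'r⟩ : (closedBall z δ ∩ ball c r).Nonempty := by
    rw [← closure_ball c hr.ne'] at hz
    exact mem_closure_iff_nhds.1 hz _ (closedBall_mem_nhds z hδ)
  obtain ⟨γ, hγ⟩ := (hs.countable.isPathConnected_ball_diff_of_one_lt_rank h c hr).joinedIn
    z' ⟨hz'r, hδs hz'δ⟩ p ⟨hp, hps⟩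
  have hB : IsConnected (closedBall c r ∩ closedBall z δ) :=
    ((convex_closedBall c r).inter (convex_closedBall z δ)).isConnected
      ⟨z', ball_subset_closedBall hz'r, hz'δ⟩
  refine ⟨(closedBall c r ∩ closedBall z δ) ∪ range γ, ?_, ?_, ?_, Or.inr ⟨1, γ.target⟩, ?_⟩
  · refine union_subset (fun w hw => ⟨hw.1, hδs hw.2⟩) ?_
    rintro _ ⟨t, rfl⟩
    exact ⟨ball_subset_closedBall (hγ t).1, (hγ t).2⟩
  · exact ((isCompact_closedBall c r).inter_right isClosed_closedBall).union
      (isCompact_range γ.continuous)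
  · exact hB.union ⟨z', ⟨ball_subset_closedBall hz'r, hz'δ⟩, ⟨0, γ.source⟩⟩
      (isConnected_range γ.continuous)
  · exact mem_of_superset (inter_mem_nhdsWithin _ (closedBall_mem_nhds z hδ)) subset_union_left

end PathConnected

theorem exists_countable_isCompact_zero_mem_closure_diff :
    ∃ K : Set ℝ, IsCompact K ∧ K.Countable ∧ (0 : ℝ) ∈ K ∧ (0 : ℝ) ∈ closure (K \ {0}) := by
  have hlim := tendsto_one_div_add_atTop_nhds_zero_nat (𝕜 := ℝ)
  refine ⟨insert 0 (range fun k : ℕ => 1 / ((k : ℝ) + 1)), hlim.isCompact_insert_range,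
    (countable_range _).insert 0, mem_insert _ _, mem_closure_of_tendsto hlim
      (Eventually.of_forall fun k => ⟨mem_insert_of_mem _ (mem_range_self k), ?_⟩)⟩
  simp only [mem_singleton_iff, one_div, inv_eq_zero]
  positivity

section GluedSheets

variable {E : Type*} [PseudoMetricSpace E] {P : Set E} {K : Set ℝ}

/-- Distinct sheets `sheetMap P (c, ·)` meet exactly along `P × {0}`. -/
noncomputable def sheetMap (P : Set E) (q : ℝ × E) : E × ℝ := (q.2, q.1 * infDist q.2 P)

noncomputable def sheetIndex (P : Set E) (w : E × ℝ) : ℝ := w.2 / infDist w.1 P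

def gluedSheets (K : Set ℝ) (C P : Set E) : Set (E × ℝ) := sheetMap P '' (K ×ˢ C)

theorem continuous_sheetMap : Continuous (sheetMap P) :=
  continuous_snd.prodMk (continuous_fst.mul ((continuous_infDist_pt P).comp continuous_snd))

theorem sheetMap_of_mem (c : ℝ) {z : E} (hz : z ∈ P) : sheetMap P (c, z) = (z, 0) := by
  simp [sheetMap, infDist_zero_of_mem hz]

theorem sheetMap_zero (z : E) : sheetMap P (0, z) = (z, 0) := by
  simp [sheetMap]

theorem mk_zero_mem_gluedSheets {C : Set E} (h0 : (0 : ℝ) ∈ K) {z : E} (hz : z ∈ C) :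
    (z, (0 : ℝ)) ∈ gluedSheets K C P :=
  sheetMap_zero (P := P) z ▸ ⟨(0, z), ⟨h0, hz⟩, rfl⟩

theorem sheetIndex_sheetMap (hP : IsClosed P) (hPne : P.Nonempty) (c : ℝ) {z : E}
    (hz : z ∉ P) : sheetIndex P (sheetMap P (c, z)) = c :=
  mul_div_cancel_right₀ c ((hP.notMem_iff_infDist_pos hPne).1 hz).ne'

theorem sheetMap_sheetIndex (hP : IsClosed P) (hPne : P.Nonempty) {w : E × ℝ} (hw : w.1 ∉ P) :
    sheetMap P (sheetIndex P w, w.1) = w :=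
  Prod.ext rfl (div_mul_cancel₀ w.2 ((hP.notMem_iff_infDist_pos hPne).1 hw).ne')

theorem continuousAt_sheetIndex (hP : IsClosed P) (hPne : P.Nonempty) {w : E × ℝ}
    (hw : w.1 ∉ P) : ContinuousAt (sheetIndex P) w :=
  continuous_snd.continuousAt.div ((continuous_infDist_pt P).comp continuous_fst).continuousAt
    ((hP.notMem_iff_infDist_pos hPne).1 hw).ne'

theorem isCompact_gluedSheets {C : Set E} (hK : IsCompact K) (hC : IsCompact C) :
    IsCompact (gluedSheets K C P) :=
  (hK.prod hC).image continuous_sheetMap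

theorem isPreconnected_sheetMap_image {R : Set E} (hR : IsPreconnected R) {p : E} (hpR : p ∈ R)
    (hpP : p ∈ P) : IsPreconnected (sheetMap P '' (K ×ˢ R)) := by
  refine isPreconnected_of_forall (p, 0) ?_
  rintro _ ⟨⟨c, z⟩, ⟨hc, hz⟩, rfl⟩
  refine ⟨(fun w => sheetMap P (c, w)) '' R, ?_, ⟨p, hpR, sheetMap_of_mem c hpP⟩, ⟨z, hz, rfl⟩,
    hR.image _ (continuous_sheetMap.comp (Continuous.prodMk_right c)).continuousOn⟩
  rintro _ ⟨w, hw, rfl⟩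
  exact ⟨(c, w), ⟨hc, hw⟩, rfl⟩

theorem isConnected_gluedSheets {C : Set E} (hK : K.Nonempty) (hC : IsPreconnected C) {p : E}
    (hpC : p ∈ C) (hpP : p ∈ P) : IsConnected (gluedSheets K C P) :=
  ⟨(hK.prod ⟨p, hpC⟩).image _, isPreconnected_sheetMap_image hC hpC hpP⟩

theorem preimage_fst_mem_nhdsWithin_gluedSheets {C R : Set E} {x : E × ℝ}
    (hR : R ∈ 𝓝[C] x.1) : Prod.fst ⁻¹' R ∈ 𝓝[gluedSheets K C P] x := by
  refine continuous_fst.continuousWithinAt.tendsto_nhdsWithin ?_ hR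
  rintro _ ⟨⟨c, z⟩, ⟨-, hz⟩, rfl⟩
  exact hz

theorem sheetMap_image_mem_nhdsWithin {C R : Set E} {x : E × ℝ} (hR : R ∈ 𝓝[C] x.1) :
    sheetMap P '' (K ×ˢ R) ∈ 𝓝[gluedSheets K C P] x := by
  filter_upwards [preimage_fst_mem_nhdsWithin_gluedSheets hR, self_mem_nhdsWithin] with w hwR hwX
  obtain ⟨⟨c, z⟩, ⟨hc, -⟩, rfl⟩ := hwX
  exact ⟨(c, z), ⟨hc, hwR⟩, rfl⟩

theorem sheetMap_image_mem_nhdsWithin_of_notMem (hP : IsClosed P) (hPne : P.Nonempty)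
    {C R : Set E} {K' : Set ℝ} {c : ℝ} {z : E} (hc : c ∈ K') (hz : z ∉ P) (hK' : K' ∈ 𝓝[K] c)
    (hR : R ∈ 𝓝[C] z) :
    sheetMap P '' (K' ×ˢ R) ∈ 𝓝[gluedSheets K C P] (sheetMap P (c, z)) := by
  obtain ⟨V, hV, hVK⟩ := mem_nhdsWithin_iff_exists_mem_nhds_inter.1 hK'
  have hidx : sheetIndex P ⁻¹' V ∈ 𝓝 (sheetMap P (c, z)) :=
    (continuousAt_sheetIndex hP hPne hz).preimage_mem_nhds
      (by rwa [sheetIndex_sheetMap hP hPne c hz])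
  filter_upwards [preimage_fst_mem_nhdsWithin_gluedSheets hR, mem_nhdsWithin_of_mem_nhds hidx,
    self_mem_nhdsWithin] with w hwR hwV hwX
  obtain ⟨⟨c', z'⟩, ⟨hc', -⟩, rfl⟩ := hwX
  by_cases hz' : z' ∈ P
  · exact ⟨(c, z'), ⟨hc, hwR⟩, by rw [sheetMap_of_mem c hz', sheetMap_of_mem c' hz']⟩
  · rw [mem_preimage, sheetIndex_sheetMap hP hPne c' hz'] at hwV
    exact ⟨(c', z'), ⟨hVK ⟨hwV, hc'⟩, hwR⟩, rfl⟩

/-- Near a point of the limit sheet `0`, a continuum missing `P × {0}` would have a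
nondegenerate interval of sheet indices, but these lie in the countable set `K`. -/
theorem not_disjoint_of_mem_nhdsWithin_gluedSheets (hK : K.Countable) (h0 : (0 : ℝ) ∈ K)
    (hK0 : (0 : ℝ) ∈ closure (K \ {0})) (hP : IsClosed P) (hPne : P.Nonempty) {C : Set E}
    {z : E} (hz : z ∈ C) (hzP : z ∉ P) {T : Set (E × ℝ)} (hTX : T ⊆ gluedSheets K C P)
    (hT : IsPreconnected T) (hTz : T ∈ 𝓝[gluedSheets K C P] (z, 0)) :
    ¬ Disjoint T (P ×ˢ {0}) := by
  intro hTP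
  have hoff : ∀ w ∈ T, w.1 ∉ P ∧ sheetIndex P w ∈ K := by
    intro w hw
    obtain ⟨⟨c, z'⟩, ⟨hc, -⟩, rfl⟩ := hTX hw
    have hz' : z' ∉ P := fun hz' =>
      disjoint_left.1 hTP hw (by rw [sheetMap_of_mem c hz']; exact ⟨hz', rfl⟩)
    exact ⟨hz', (sheetIndex_sheetMap hP hPne c hz').symm ▸ hc⟩
  have himg : IsPreconnected (sheetIndex P '' T) :=
    hT.image _ fun w hw => (continuousAt_sheetIndex hP hPne (hoff w hw).1).continuousWithinAt
  have h0T : (0 : ℝ) ∈ sheetIndex P '' T :=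
    ⟨(z, 0), mem_of_mem_nhdsWithin (mk_zero_mem_gluedSheets h0 hz) hTz, by simp [sheetIndex]⟩
  obtain ⟨c, hcT, hcK⟩ : ∃ c, sheetMap P (c, z) ∈ T ∧ c ∈ K \ {0} := by
    have hg : Tendsto (fun c => sheetMap P (c, z)) (𝓝[K] 0) (𝓝[gluedSheets K C P] (z, 0)) := by
      rw [← sheetMap_zero (P := P) z]
      exact (continuous_sheetMap.comp (Continuous.prodMk_left z)).continuousWithinAt
        |>.tendsto_nhdsWithin fun c hc => ⟨(c, z), ⟨hc, hz⟩, rfl⟩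
    have := mem_closure_iff_nhdsWithin_neBot.1 hK0
    have hcT : ∀ᶠ c in 𝓝[K \ {0}] 0, sheetMap P (c, z) ∈ T :=
      nhdsWithin_mono _ sdiff_subset (hg hTz)
    exact (hcT.and self_mem_nhdsWithin).exists
  have hcT' : c ∈ sheetIndex P '' T := ⟨_, hcT, sheetIndex_sheetMap hP hPne c hzP⟩
  have huIcc : (uIcc 0 c).Countable :=
    hK.mono ((himg.ordConnected.uIcc_subset h0T hcT').trans
      (image_subset_iff.2 fun w hw => (hoff w hw).2))
  exact (Cardinal.Real.Icc_countable_iff.1 huIcc).not_gt (min_lt_max.2 (Ne.symm hcK.2))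

end GluedSheets

theorem not_isNAposyndetic_gluedSheets {E : Type*} [MetricSpace E] {K : Set ℝ}
    (hK : K.Countable) (h0 : (0 : ℝ) ∈ K) (hK0 : (0 : ℝ) ∈ closure (K \ {0})) {C : Set E}
    {P : Finset E} (hPC : ↑P ⊆ C) (hPne : P.Nonempty) {z : E} (hz : z ∈ C) (hzP : z ∉ P) :
    ¬ IsNAposyndetic (gluedSheets K C P) P.card := by
  classical
  rw [isNAposyndetic_subtype_iff]
  intro H
  obtain ⟨T, hTX, -, hT, hTz, hTP⟩ := H _ (mk_zero_mem_gluedSheets h0 hz) (P.image (·, (0 : ℝ)))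
    (P.card_image_of_injective (Prod.mk_left_injective 0))
    (by rw [Finset.coe_image, image_subset_iff]
        exact fun q hq => mk_zero_mem_gluedSheets h0 (hPC hq))
    (by simpa using hzP)
  rw [Finset.coe_image, ← prod_singleton] at hTP
  exact not_disjoint_of_mem_nhdsWithin_gluedSheets hK h0 hK0 P.finite_toSet.isClosed hPne hz hzP
    hTX hT.isPreconnected hTz hTP

section Aposyndesis

variable {E : Type*} [NormedAddCommGroup E] [NormedSpace ℝ E] [ProperSpace E] {K : Set ℝ}
  {c₀ : E} {r : ℝ}

theorem exists_subcontinuum_nhdsWithin_gluedSheets_of_mem (h : 1 < Module.rank ℝ E)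
    (hK : IsCompact K) {P : Set E} {c : ℝ} {p : E} (hc : c ∈ K) (hpP : p ∈ P)
    (hp : p ∈ ball c₀ r) {A : Set (E × ℝ)} (hA : A.Finite) (hpA : (p, (0 : ℝ)) ∉ A) :
    ∃ T ⊆ gluedSheets K (closedBall c₀ r) P, IsCompact T ∧ IsConnected T ∧
      T ∈ 𝓝[gluedSheets K (closedBall c₀ r) P] (p, 0) ∧ Disjoint T A := by
  obtain ⟨R, hRs, hRc, hRconn, hpR, hRnhds⟩ := exists_isConnected_mem_nhdsWithin_closedBall_diff h
    ((hA.image Prod.fst).sdiff (t := {p})) (ball_subset_closedBall hp) (by simp) hp (by simp)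
  refine ⟨sheetMap P '' (K ×ˢ R), image_mono (prod_mono subset_rfl (hRs.trans sdiff_subset)),
    (hK.prod hRc).image continuous_sheetMap,
    ⟨⟨_, (c, p), ⟨hc, hpR⟩, rfl⟩, isPreconnected_sheetMap_image hRconn.isPreconnected hpR hpP⟩,
    sheetMap_image_mem_nhdsWithin hRnhds, ?_⟩
  rw [disjoint_left]
  rintro _ ⟨⟨c', z⟩, ⟨-, hz⟩, rfl⟩ ha
  by_cases hzp : z = p
  · subst hzp
    exact hpA (sheetMap_of_mem c' hpP ▸ ha)
  · exact (hRs hz).2 ⟨⟨_, ha, rfl⟩, hzp⟩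

theorem exists_subcontinuum_nhdsWithin_gluedSheets_of_notMem (h : 1 < Module.rank ℝ E)
    (hK : IsCompact K) {P : Finset E} (hP : ↑P ⊆ ball c₀ r) {c : ℝ} {z : E} (hc : c ∈ K)
    (hz : z ∈ closedBall c₀ r) (hzP : z ∉ P) {A : Finset (E × ℝ)} (hA : A.card < P.card)
    (hzA : sheetMap P (c, z) ∉ A) :
    ∃ T ⊆ gluedSheets K (closedBall c₀ r) P, IsCompact T ∧ IsConnected T ∧
      T ∈ 𝓝[gluedSheets K (closedBall c₀ r) P] (sheetMap P (c, z)) ∧ Disjoint T A := by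
  classical
  have hPc : IsClosed (P : Set E) := P.finite_toSet.isClosed
  have hPne : (P : Set E).Nonempty := Finset.coe_nonempty.2 (Finset.card_pos.1 (by omega))
  -- `R` must avoid the base points of the points of `A` on sheet `c` or on `P × {0}`;
  -- the other points of `A` are excluded by keeping only the sheets near `c`.
  set S := (A.filter fun a => a.1 ∈ P ∨ sheetIndex P a = c).image Prod.fst
  have hzS : z ∉ S := by
    simp only [S, Finset.mem_image, Finset.mem_filter]
    rintro ⟨a, ⟨haA, haP | hac⟩, rfl⟩
    · exact hzP haP
    · exact hzA (by rwa [← hac, sheetMap_sheetIndex hPc hPne hzP])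
  have hScard : S.card < P.card := Finset.card_image_le.trans_lt ((A.card_filter_le _).trans_lt hA)
  obtain ⟨p, hpP, hpS⟩ := Finset.exists_mem_notMem_of_card_lt_card hScard
  obtain ⟨R, hRs, hRc, hRconn, hpR, hRnhds⟩ :=
    exists_isConnected_mem_nhdsWithin_closedBall_diff h S.finite_toSet hz hzS (hP hpP) hpS
  have hV : (((A.image (sheetIndex P)).erase c : Finset ℝ) : Set ℝ)ᶜ ∈ 𝓝 c :=
    (Finset.finite_toSet _).isClosed.isOpen_compl.mem_nhds (by simp)
  obtain ⟨ρ, hρ, hρV⟩ := nhds_basis_closedBall.mem_iff.1 hV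
  have hcρ : c ∈ K ∩ closedBall c ρ := ⟨hc, mem_closedBall_self hρ.le⟩
  refine ⟨sheetMap P '' ((K ∩ closedBall c ρ) ×ˢ R),
    image_mono (prod_mono inter_subset_left (hRs.trans sdiff_subset)),
    ((hK.inter_right isClosed_closedBall).prod hRc).image continuous_sheetMap,
    ⟨⟨_, (c, p), ⟨hcρ, hpR⟩, rfl⟩, isPreconnected_sheetMap_image hRconn.isPreconnected hpR hpP⟩,
    sheetMap_image_mem_nhdsWithin_of_notMem hPc hPne hcρ hzP
      (inter_mem_nhdsWithin _ (closedBall_mem_nhds c hρ)) hRnhds, ?_⟩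
  rw [disjoint_left]
  rintro _ ⟨⟨c', z'⟩, ⟨⟨-, hc'ρ⟩, hz'⟩, rfl⟩ ha
  have hz'S : z' ∉ S := (hRs hz').2
  by_cases hz'P : z' ∈ P
  · exact hz'S (Finset.mem_image.2 ⟨_, Finset.mem_filter.2 ⟨ha, Or.inl hz'P⟩, rfl⟩)
  have hidx := sheetIndex_sheetMap hPc hPne c' hz'P
  by_cases hcc : c' = c
  · exact hz'S (Finset.mem_image.2 ⟨_, Finset.mem_filter.2 ⟨ha, Or.inr (hidx.trans hcc)⟩, rfl⟩)
  · exact hρV hc'ρ (Finset.mem_erase.2 ⟨hcc, Finset.mem_image.2 ⟨_, ha, hidx⟩⟩)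

theorem exists_subcontinuum_nhdsWithin_gluedSheets (h : 1 < Module.rank ℝ E) (hK : IsCompact K)
    {P : Finset E} (hP : ↑P ⊆ ball c₀ r) {x : E × ℝ} (hx : x ∈ gluedSheets K (closedBall c₀ r) P)
    {A : Finset (E × ℝ)} (hA : A.card < P.card) (hxA : x ∉ A) :
    ∃ T ⊆ gluedSheets K (closedBall c₀ r) P, IsCompact T ∧ IsConnected T ∧
      T ∈ 𝓝[gluedSheets K (closedBall c₀ r) P] x ∧ Disjoint T A := by
  obtain ⟨⟨c, z⟩, ⟨hc, hz⟩, rfl⟩ := hx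
  by_cases hzP : z ∈ P
  · rw [sheetMap_of_mem c hzP] at hxA ⊢
    exact exists_subcontinuum_nhdsWithin_gluedSheets_of_mem h hK hc hzP (hP hzP)
      A.finite_toSet hxA
  · exact exists_subcontinuum_nhdsWithin_gluedSheets_of_notMem h hK hP hc hz hzP hA hxA

theorem isNAposyndetic_gluedSheets (h : 1 < Module.rank ℝ E) (hK : IsCompact K) {P : Finset E}
    (hP : ↑P ⊆ ball c₀ r) {m : ℕ} (hm : m < P.card) :
    IsNAposyndetic (gluedSheets K (closedBall c₀ r) P) m :=
  isNAposyndetic_subtype_iff.2 fun _ hx _ hA _ hxA =>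
    exists_subcontinuum_nhdsWithin_gluedSheets h hK hP hx (hA ▸ hm) hxA

end Aposyndesis

/-- For each `n ∈ ℕ` (`n ≥ 1`) there is a nondegenerate continuum that is `n`-aposyndetic
but not `(n+1)`-aposyndetic. -/
theorem statement19 :
    ∀ n : ℕ, 0 < n →
      ∃ X : Continuum, Nontrivial X ∧ IsNAposyndetic X n ∧
        ¬ IsNAposyndetic X (n + 1) := by
  intro n _
  obtain ⟨K, hKc, hKcount, hK0, hK0'⟩ := exists_countable_isCompact_zero_mem_closure_diff
  obtain ⟨P, hPball, hPcard⟩ :=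
    (infinite_of_mem_nhds (0 : ℂ) (ball_mem_nhds 0 one_pos)).exists_subset_card_eq (n + 1)
  obtain ⟨p, hp⟩ : P.Nonempty := Finset.card_pos.1 (by omega)
  have hPD : ↑P ⊆ closedBall (0 : ℂ) 1 := hPball.trans ball_subset_closedBall
  have h1P : (1 : ℂ) ∉ P := fun h => by simpa using hPball h
  set X := gluedSheets K (closedBall (0 : ℂ) 1) P
  have : CompactSpace X :=
    isCompact_iff_compactSpace.1 (isCompact_gluedSheets hKc (isCompact_closedBall 0 1))
  have : ConnectedSpace X := Subtype.connectedSpace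
    (isConnected_gluedSheets ⟨0, hK0⟩ (convex_closedBall 0 1).isPreconnected (hPD hp) hp)
  have hne : ((1 : ℂ), (0 : ℝ)) ≠ (p, 0) := by simpa using fun h : 1 = p => h1P (h ▸ hp)
  refine ⟨⟨X⟩, nontrivial_of_ne ⟨_, mk_zero_mem_gluedSheets hK0 (by simp)⟩
    ⟨_, mk_zero_mem_gluedSheets hK0 (hPD hp)⟩ (Subtype.coe_ne_coe.1 hne), ?_, ?_⟩
  · refine isNAposyndetic_gluedSheets ?_ hKc hPball (by omega)
    rw [Complex.rank_real_complex]
    norm_num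
  · exact hPcard ▸ not_isNAposyndetic_gluedSheets hKcount hK0 hK0' hPD ⟨p, hp⟩ (by simp) h1P
end
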